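/- Let 2 < p ≤ 3. Then the divided difference h(t₁,t₂) of g(t) = |t|^{p-2}t (with h(t,t) = (p−1)|t|^{p-2}) is locally Hölder continuous of exponent p−2 on ℝ², i.e. h ∈ C^{0,p-2}_loc(ℝ²). -/

import Mathlib

open Real

-- subadditivity of rpow on reals, from NNReal version
lemma aux_rpow_add_le {α : ℝ} (h0 : 0 ≤ α) (h1 : α ≤ 1) {a b : ℝ} (ha : 0 ≤ a) (hb : 0 ≤ b) :
    (a + b) ^ α ≤ a ^ α + b ^ α := by
  have := NNReal.rpow_add_le_add_rpow a.toNNReal b.toNNReal h0 h1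
  have hcoe := NNReal.coe_le_coe.2 this
  push_cast at hcoe
  rwa [Real.coe_toNNReal _ ha, Real.coe_toNNReal _ hb] at hcoe

lemma aux_abs_rpow_sub {α : ℝ} (h0 : 0 ≤ α) (h1 : α ≤ 1) (a b : ℝ) :
    |(|a| ^ α - |b| ^ α)| ≤ |a - b| ^ α := by
  wlog hab : |b| ≤ |a| generalizing a b
  · rw [abs_sub_comm, abs_sub_comm a b]; exact this b a (le_of_not_ge hab)
  have h2 : |a| ^ α - |b| ^ α ≤ (|a| - |b|) ^ α := by
    have := aux_rpow_add_le h0 h1 (sub_nonneg.2 hab) (abs_nonneg b)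
    rw [sub_add_cancel] at this
    linarith
  have h3 : (|a| - |b|) ^ α ≤ |a - b| ^ α :=
    Real.rpow_le_rpow (sub_nonneg.2 hab) (abs_sub_abs_le_abs_sub a b) h0
  rw [abs_of_nonneg (sub_nonneg.2 (Real.rpow_le_rpow (abs_nonneg b) hab h0))]
  exact h2.trans h3

lemma aux_hasDerivAt {p : ℝ} (hp : 2 < p) (t : ℝ) :
    HasDerivAt (fun t : ℝ => |t| ^ (p - 2) * t) ((p - 1) * |t| ^ (p - 2)) t := by
  rcases lt_trichotomy t 0 with ht | rfl | ht
  · have h2 : HasDerivAt (fun t : ℝ => (-t) ^ (p - 1))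
        ((p - 1) * (-t) ^ (p - 1 - 1) * (-1)) t := by
      have := (Real.hasDerivAt_rpow_const (x := -t) (p := p - 1)
        (Or.inl (neg_ne_zero.2 ht.ne))).comp t (hasDerivAt_neg t)
      simpa [mul_comm, Function.comp_def] using this
    have h1 : HasDerivAt (fun t : ℝ => -((-t) ^ (p - 1))) ((p - 1) * |t| ^ (p - 2)) t := by
      have := h2.neg
      rw [abs_of_neg ht]
      refine this.congr_deriv ?_
      rw [show p - 1 - 1 = p - 2 by ring]; ring
    apply h1.congr_of_eventuallyEq
    filter_upwards [Iio_mem_nhds ht] with s hs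
    rw [abs_of_neg hs, show p - 1 = (p - 2) + 1 by ring,
      Real.rpow_add_one (neg_ne_zero.2 hs.ne) (p - 2)]
    ring
  · have hz : (p - 1) * |(0:ℝ)| ^ (p - 2) = 0 := by
      rw [abs_zero, Real.zero_rpow (by norm_num; linarith)]; ring
    rw [hz, hasDerivAt_iff_tendsto_slope]
    have hcont : Filter.Tendsto (fun s : ℝ => |s| ^ (p - 2)) (nhdsWithin 0 {(0:ℝ)}ᶜ) (nhds 0) := by
      have : Filter.Tendsto (fun s : ℝ => |s| ^ (p - 2)) (nhds 0) (nhds (|(0:ℝ)| ^ (p - 2))) :=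
        ((continuous_abs.rpow_const fun x => Or.inr (by linarith)).tendsto 0)
      rw [abs_zero, Real.zero_rpow (by norm_num; linarith)] at this
      exact this.mono_left nhdsWithin_le_nhds
    apply hcont.congr'
    filter_upwards [self_mem_nhdsWithin] with s hs
    have hs0 : s ≠ 0 := hs
    rw [slope_def_field]
    field_simp
    simp
  · have h2 : HasDerivAt (fun t : ℝ => t ^ (p - 1)) ((p - 1) * t ^ (p - 1 - 1)) t :=
      Real.hasDerivAt_rpow_const (x := t) (p := p - 1) (Or.inl ht.ne')
    have h1 : HasDerivAt (fun t : ℝ => t ^ (p - 1)) ((p - 1) * |t| ^ (p - 2)) t := by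
      rw [abs_of_pos ht]; convert h2 using 2; ring
    apply h1.congr_of_eventuallyEq
    filter_upwards [Ioi_mem_nhds ht] with s hs
    rw [abs_of_pos hs, show p - 1 = (p - 2) + 1 by ring, Real.rpow_add_one hs.ne' (p - 2)]

/-- For 2 < p ≤ 3 the divided difference h of g(t) = |t|^{p-2}t is locally Hölder
continuous of exponent p−2 on ℝ². -/
theorem stmt9 (p : ℝ) (hp1 : 2 < p) (hp2 : p ≤ 3)
    (g : ℝ → ℝ) (hg : ∀ t : ℝ, g t = |t| ^ (p - 2) * t)
    (h : ℝ × ℝ → ℝ)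
    (hh : ∀ t₁ t₂ : ℝ, t₁ ≠ t₂ → h (t₁, t₂) = (g t₁ - g t₂) / (t₁ - t₂))
    (hh' : ∀ t : ℝ, h (t, t) = (p - 1) * |t| ^ (p - 2)) :
    ∀ K : Set (ℝ × ℝ), IsCompact K →
      ∃ C : NNReal, HolderOnWith C (Real.toNNReal (p - 2)) h K := by
  have hα0 : (0:ℝ) < p - 2 := by linarith
  have hα1 : p - 2 ≤ 1 := by linarith
  have hcont : ∀ a b : ℝ, Continuous fun s : ℝ => (p - 1) * |a + s * b| ^ (p - 2) := by
    intro a b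
    apply Continuous.mul continuous_const
    exact Continuous.rpow_const (continuous_const.add (continuous_id.mul continuous_const)).abs
      fun x => Or.inr hα0.le
  -- integral representation
  have key : ∀ u : ℝ × ℝ,
      h u = ∫ s in (0:ℝ)..1, (p - 1) * |u.2 + s * (u.1 - u.2)| ^ (p - 2) := by
    rintro ⟨t₁, t₂⟩
    by_cases hne : t₁ = t₂
    · subst hne
      simp [hh', intervalIntegral.integral_const]
    · show h (t₁, t₂) = ∫ s in (0:ℝ)..1, (p - 1) * |t₂ + s * (t₁ - t₂)| ^ (p - 2)
      rw [hh t₁ t₂ hne, hg, hg]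
      have hFTC : (∫ s in (0:ℝ)..1, ((p - 1) * |t₂ + s * (t₁ - t₂)| ^ (p - 2)) * (t₁ - t₂))
          = |t₁| ^ (p - 2) * t₁ - |t₂| ^ (p - 2) * t₂ := by
        have hd : ∀ s ∈ Set.uIcc (0:ℝ) 1,
            HasDerivAt (fun s : ℝ => |t₂ + s * (t₁ - t₂)| ^ (p - 2) * (t₂ + s * (t₁ - t₂)))
              (((p - 1) * |t₂ + s * (t₁ - t₂)| ^ (p - 2)) * (t₁ - t₂)) s := by
          intro s _
          have hl : HasDerivAt (fun s : ℝ => t₂ + s * (t₁ - t₂)) (t₁ - t₂) s := by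
            simpa using ((hasDerivAt_id s).mul_const (t₁ - t₂)).const_add t₂
          exact (aux_hasDerivAt hp1 _).comp s hl
        have := intervalIntegral.integral_eq_sub_of_hasDerivAt hd
          (((hcont t₂ (t₁ - t₂)).mul continuous_const).intervalIntegrable 0 1)
        simpa using this
      rw [intervalIntegral.integral_mul_const] at hFTC
      rw [← hFTC]
      exact mul_div_cancel_right₀ _ (sub_ne_zero.2 hne)
  -- global Hölder estimate
  have main : ∀ u v : ℝ × ℝ, dist (h u) (h v) ≤ (p - 1) * dist u v ^ (p - 2) := by
    intro u v
    rw [key u, key v, Real.dist_eq,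
      ← intervalIntegral.integral_sub ((hcont u.2 (u.1 - u.2)).intervalIntegrable 0 1)
        ((hcont v.2 (v.1 - v.2)).intervalIntegrable 0 1)]
    have hb : ∀ s ∈ Set.uIoc (0:ℝ) 1,
        ‖(p - 1) * |u.2 + s * (u.1 - u.2)| ^ (p - 2)
          - (p - 1) * |v.2 + s * (v.1 - v.2)| ^ (p - 2)‖ ≤ (p - 1) * dist u v ^ (p - 2) := by
      intro s hs
      rw [Set.uIoc_of_le zero_le_one] at hs
      set x := u.2 + s * (u.1 - u.2)
      set y := v.2 + s * (v.1 - v.2)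
      have hxy : |x - y| ≤ dist u v := by
        have e : x - y = (1 - s) * (u.2 - v.2) + s * (u.1 - v.1) := by simp only [x, y]; ring
        have h1 : |u.1 - v.1| ≤ dist u v := by
          rw [Prod.dist_eq]; exact le_trans (le_of_eq (Real.dist_eq _ _).symm) (le_max_left _ _)
        have h2 : |u.2 - v.2| ≤ dist u v := by
          rw [Prod.dist_eq]; exact le_trans (le_of_eq (Real.dist_eq _ _).symm) (le_max_right _ _)
        calc |x - y| ≤ (1 - s) * |u.2 - v.2| + s * |u.1 - v.1| := by
              rw [e]
              refine (abs_add_le _ _).trans ?_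
              rw [abs_mul, abs_mul, abs_of_nonneg (by linarith [hs.2] : (0:ℝ) ≤ 1 - s),
                abs_of_nonneg hs.1.le]
          _ ≤ (1 - s) * dist u v + s * dist u v := by
              gcongr
              · linarith [hs.2]
              · exact hs.1.le
          _ = dist u v := by ring
      rw [← mul_sub, Real.norm_eq_abs, abs_mul, abs_of_nonneg (by linarith : (0:ℝ) ≤ p - 1)]
      have hfac : |(|x| ^ (p - 2) - |y| ^ (p - 2))| ≤ dist u v ^ (p - 2) :=
        (aux_abs_rpow_sub hα0.le hα1 x y).trans
          (Real.rpow_le_rpow (abs_nonneg _) hxy hα0.le)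
      exact mul_le_mul_of_nonneg_left hfac (by linarith)
    have := intervalIntegral.norm_integral_le_of_norm_le_const hb
    simpa using this
  have hW : HolderWith (Real.toNNReal (p - 1)) (Real.toNNReal (p - 2)) h := by
    intro x y
    rw [edist_dist, edist_dist]
    calc ENNReal.ofReal (dist (h x) (h y))
        ≤ ENNReal.ofReal ((p - 1) * dist x y ^ (p - 2)) := ENNReal.ofReal_le_ofReal (main x y)
      _ = (Real.toNNReal (p - 1) : ENNReal) * ENNReal.ofReal (dist x y) ^ ((Real.toNNReal (p - 2) : NNReal) : ℝ) := by
        rw [ENNReal.ofReal_mul (by linarith : (0:ℝ) ≤ p - 1),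
          Real.coe_toNNReal _ hα0.le,
          ← ENNReal.ofReal_rpow_of_nonneg dist_nonneg hα0.le]
        rfl
  exact fun K _ => ⟨Real.toNNReal (p - 1), hW.holderOnWith K⟩
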